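/- Let α be a multisegment with minimum value −e and maximum value e, containing the symmetric simple sub-multisegment α₁ = {[−e,b], [−e+1,b+1], ..., [−b,e]}, and suppose the shortest segments of α containing −e and e both lie in α₁ (having length e+b+1). Then any irreducible ladder sub-multisegment γ of α generating a segment containing {b, ..., e} (i.e., with n_γ ≥ e−b+1 segments and longest segment length L_γ ≥ e+b+1) satisfies S_γ = 2e+1 and must equal α₁. -/

import Mathlib

/-- A segment `[b, e]` is the set of consecutive integers `{b, b+1, ..., e}`,
recorded as the pair `(b, e)` of its base `b` and end `e`. -/
abbrev Segment : Type := ℤ × ℤ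

/-- A multisegment is a finite multiset of segments. -/
abbrev Multisegment : Type := Multiset Segment

/-- The length `e - b + 1` of the segment `[b, e]`. -/
def Segment.len (Δ : Segment) : ℤ := Δ.2 - Δ.1 + 1

/-- `[b₁,e₁]` precedes `[b₂,e₂]` iff `b₁ < b₂`, `e₁ < e₂` and `b₂ ≤ e₁ + 1`. -/
def Precedes (Δ₁ Δ₂ : Segment) : Prop :=
  Δ₁.1 < Δ₂.1 ∧ Δ₁.2 < Δ₂.2 ∧ Δ₂.1 ≤ Δ₁.2 + 1

instance (Δ₁ Δ₂ : Segment) : Decidable (Precedes Δ₁ Δ₂) := by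
  unfold Precedes; infer_instance

/-- Every member of a multisegment is a genuine (nonempty) segment. -/
def IsMultisegment (α : Multisegment) : Prop := ∀ Δ ∈ α, Δ.1 ≤ Δ.2

/-- The rank `r_{i,j}`: the number of segments `[k,l]` of `α` with `k ≤ i` and `j ≤ l`. -/
def rank (α : Multisegment) (i j : ℤ) : ℕ :=
  (α.filter fun Δ => Δ.1 ≤ i ∧ j ≤ Δ.2).card

/-- `n_α`: the number of segments of `α`, counted with multiplicity. -/
def nSeg (α : Multisegment) : ℕ := Multiset.card α

instance : Std.Commutative (fun a b : ℤ => max a b) := ⟨max_comm⟩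
instance : Std.Associative (fun a b : ℤ => max a b) := ⟨max_assoc⟩

/-- `L_α`: the length of the longest segment of `α` (0 for the empty multisegment). -/
def Lmax (α : Multisegment) : ℤ := (α.map Segment.len).fold (fun a b => max a b) 0

/-- The support `∪_{Δ ∈ α} Δ` of a multisegment, as a finite set of integers. -/
noncomputable def supp (α : Multisegment) : Finset ℤ := α.toFinset.biUnion fun Δ => Finset.Icc Δ.1 Δ.2

/-- `S_α`: the number of integers in `∪_{Δ ∈ α} Δ`. -/
noncomputable def Ssize (α : Multisegment) : ℕ := (supp α).card

/-- `c_α`: the number of interval components of `∪_{Δ ∈ α} Δ`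
(counted via their left endpoints). -/
noncomputable def comp (α : Multisegment) : ℕ :=
  ((supp α).filter fun x => x - 1 ∉ supp α).card

/-! ### The Mœglin–Waldspurger algorithm -/

/-- Remove the end value from a segment, dropping it if it becomes empty. -/
def removeEnd (Δ : Segment) : Option Segment :=
  if Δ.1 ≤ Δ.2 - 1 then some (Δ.1, Δ.2 - 1) else none

/-- Among the segments of `l` with end value `m`, pick a shortest one (if any). -/
def pickShortest (m : ℤ) (l : List Segment) : Option Segment :=
  (l.filter fun Δ => Δ.2 == m).foldl (fun acc Δ =>
    match acc with
    | none => some Δ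
    | some Δ' => if Δ'.1 < Δ.1 then some Δ else some Δ') none

/-- Starting from a current segment `Δ`, greedily build the Mœglin–Waldspurger chain:
at each step choose a shortest segment preceding the current one whose end value is one
less.  Returns the chosen chain together with the unchosen segments. -/
def pickChain : ℕ → Segment → List Segment → List Segment × List Segment
  | 0, Δ, rest => ([Δ], rest)
  | n + 1, Δ, rest =>
    match pickShortest (Δ.2 - 1) (rest.filter fun Δ' => decide (Precedes Δ' Δ)) with
    | none => ([Δ], rest)
    | some Δ' =>
      let p := pickChain n Δ' (rest.erase Δ')
      (Δ :: p.1, p.2)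

/-- One iteration of the Mœglin–Waldspurger algorithm: returns the produced dual
segment `[m, e]` together with the multisegment `α'` left after removing the chosen
end values. -/
def mwIter (l : List Segment) : Option (Segment × List Segment) :=
  match (l.map fun Δ => Δ.2).max? with
  | none => none
  | some e =>
    match pickShortest e l with
    | none => none
    | some Δe =>
      let p := pickChain l.length Δe (l.erase Δe)
      some ((Δe.2 - ((p.1.length : ℤ) - 1), e), p.2 ++ p.1.filterMap removeEnd)

/-- The total number of integers (with multiplicity) in a list of segments. -/
def totalSize (l : List Segment) : ℕ := (l.map fun Δ => (Δ.2 - Δ.1 + 1).toNat).sum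

/-- Fueled iteration of the Mœglin–Waldspurger algorithm. -/
def mwAux : ℕ → List Segment → List Segment
  | 0, _ => []
  | n + 1, l =>
    match mwIter l with
    | none => []
    | some (Δ', l') => Δ' :: mwAux n l'

/-- The Mœglin–Waldspurger dual `α̃` of a multisegment `α`. -/
noncomputable def dual (α : Multisegment) : Multisegment :=
  (mwAux (totalSize α.toList) α.toList : List Segment)

/-! ### The partial order on multisegments -/

/-- An elementary move on multisegments: either the union–intersection move
(replace distinct overlapping `Δ₁, Δ₂` by `Δ₁ ∩ Δ₂` and `Δ₁ ∪ Δ₂`) or the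
conjunction move (replace two disjoint adjacent segments by their union). -/
inductive MoveStep : Multisegment → Multisegment → Prop
  | unionInter (α : Multisegment) (Δ₁ Δ₂ : Segment)
      (hmeet : max Δ₁.1 Δ₂.1 ≤ min Δ₁.2 Δ₂.2) (hne : Δ₁ ≠ Δ₂) :
      MoveStep (Δ₁ ::ₘ Δ₂ ::ₘ α)
        ((max Δ₁.1 Δ₂.1, min Δ₁.2 Δ₂.2) ::ₘ (min Δ₁.1 Δ₂.1, max Δ₁.2 Δ₂.2) ::ₘ α)
  | conj (α : Multisegment) (Δ₁ Δ₂ : Segment) (h : Δ₂.1 = Δ₁.2 + 1) :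
      MoveStep (Δ₁ ::ₘ Δ₂ ::ₘ α) ((Δ₁.1, Δ₂.2) ::ₘ α)

/-- The partial order `α ≤ β` on multisegments, generated by the elementary moves. -/
def mle (α β : Multisegment) : Prop := Relation.ReflTransGen MoveStep α β

/-- A ladder multisegment: the segments can be listed with strictly increasing
bases and strictly increasing ends. -/
def IsLadder (α : Multisegment) : Prop :=
  ∃ l : List Segment, (l : Multiset Segment) = α ∧
    l.Chain' fun Δ₁ Δ₂ => Δ₁.1 < Δ₂.1 ∧ Δ₁.2 < Δ₂.2

/-- `C_α`: the maximal number of (nonempty) components in a decomposition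
`α = ⊔ᵢ αᵢ` satisfying `α̃ = ⊔ᵢ α̃ᵢ`. -/
noncomputable def Cmax (α : Multisegment) : ℕ :=
  sSup {n | ∃ parts : Multiset Multisegment, Multiset.card parts = n ∧
    (∀ γ ∈ parts, γ ≠ 0) ∧ parts.sum = α ∧ (parts.map dual).sum = dual α}

/-- The simple multisegment `{[b,e], [b+1,e+1], ..., [b+n-1,e+n-1]}`. -/
def simpleMS (b e : ℤ) (n : ℕ) : Multisegment :=
  (Multiset.range n).map fun i => (b + i, e + i)

/-- The symmetric simple multisegment `{[-e,b], [-e+1,b+1], ..., [-b,e]}`. -/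
def symmSimple (b e : ℤ) : Multisegment :=
  (Multiset.range (e - b + 1).toNat).map fun i => (-e + i, b + i)

/-! A ladder of `n` segments inside `[-e, e]` is squeezed from both sides: its `i`-th base is
at least `-e + i` and its `i`-th end at most `e - (n - 1 - i)`, so each of its segments has
length at most `2e + 2 - n`. Under `n ≥ e - b + 1` and a segment of length `e + b + 1` every one
of these inequalities is an equality; the shortness hypotheses at `±e` then pin the remaining
ends and bases, which forces `γ = α₁`. -/

namespace List

theorem getElem_add_le_getElem_of_pairwise_lt {l : List ℤ} (hl : l.Pairwise (· < ·))
    {i j : ℕ} (hij : i ≤ j) (hj : j < l.length) :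
    l[i] + (j - i : ℕ) ≤ l[j] := by
  induction j, hij using Nat.le_induction with
  | base => simp
  | succ j hij ih =>
    have hstep : l[j] < l[j + 1] := pairwise_iff_getElem.1 hl j (j + 1) (by omega) hj (by omega)
    have := ih (by omega)
    omega

theorem getElem_eq_add_of_pairwise_lt {l : List ℤ} (hl : l.Pairwise (· < ·)) (hne : l ≠ [])
    {a : ℤ} (hhead : a ≤ l.head hne) (hlast : l.getLast hne < a + l.length)
    {i : ℕ} (hi : i < l.length) : l[i] = a + i := by
  rw [head_eq_getElem] at hhead
  rw [getLast_eq_getElem] at hlast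
  have := getElem_add_le_getElem_of_pairwise_lt hl (Nat.zero_le i) hi
  have := getElem_add_le_getElem_of_pairwise_lt hl (Nat.le_sub_one_of_lt hi) (by omega)
  omega

end List

theorem IsLadder.exists_pairwise {γ : Multisegment} (h : IsLadder γ) :
    ∃ l : List Segment, (l : Multisegment) = γ ∧
      (l.map Prod.fst).Pairwise (· < ·) ∧ (l.map Prod.snd).Pairwise (· < ·) := by
  obtain ⟨l, rfl, hl⟩ := h
  exact ⟨l, rfl, (List.isChain_map _ |>.2 (hl.imp fun _ _ h => h.1)).pairwise,
    (List.isChain_map _ |>.2 (hl.imp fun _ _ h => h.2)).pairwise⟩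

theorem Segment.len_add_length_le {l : List Segment}
    (hbase : (l.map Prod.fst).Pairwise (· < ·)) (hend : (l.map Prod.snd).Pairwise (· < ·))
    (hne : l ≠ []) {Δ : Segment} (hΔ : Δ ∈ l) :
    Δ.len + l.length ≤ (l.getLast hne).2 - (l.head hne).1 + 2 := by
  obtain ⟨k, hk, rfl⟩ := List.getElem_of_mem hΔ
  have hb := List.getElem_add_le_getElem_of_pairwise_lt hbase (Nat.zero_le k) (by simpa using hk)
  have he := List.getElem_add_le_getElem_of_pairwise_lt hend (Nat.le_sub_one_of_lt hk)
    (by rw [List.length_map]; omega)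
  simp only [List.getElem_map] at hb he
  rw [List.head_eq_getElem, List.getLast_eq_getElem, Segment.len]
  omega

theorem Lmax_cons (Δ : Segment) (α : Multisegment) : Lmax (Δ ::ₘ α) = max Δ.len (Lmax α) := by
  simp only [Lmax, Multiset.map_cons, Multiset.fold_cons_left]

theorem exists_le_len_of_le_Lmax {α : Multisegment} {v : ℤ} (hv : 0 < v) (h : v ≤ Lmax α) :
    ∃ Δ ∈ α, v ≤ Δ.len := by
  induction α using Multiset.induction_on with
  | empty => simp only [Lmax, Multiset.map_zero, Multiset.fold_zero] at h; omega
  | cons Δ α ih =>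
    rcases le_max_iff.1 (Lmax_cons Δ α ▸ h) with h | h
    · exact ⟨Δ, Multiset.mem_cons_self _ _, h⟩
    · obtain ⟨Δ', hΔ', h'⟩ := ih h
      exact ⟨Δ', Multiset.mem_cons_of_mem hΔ', h'⟩

-- `symmSimple` elaborates with `i : ℤ`, mapping over `Multiset.range` lifted through the
-- `Multiset` monad; this form over `List.range` is the one the membership lemmas apply to.
theorem symmSimple_eq_coe (b e : ℤ) :
    symmSimple b e =
      ((List.range (e - b + 1).toNat).map fun i : ℕ => ((-e + i, b + i) : Segment)) := by
  simp [symmSimple, Multiset.range, Function.comp_def]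

theorem supp_symmSimple {b e : ℤ} (hb : -e ≤ b) (hbe : b ≤ e) :
    supp (symmSimple b e) = Finset.Icc (-e) e := by
  ext x
  simp only [supp, symmSimple_eq_coe, Multiset.mem_toFinset, Finset.mem_biUnion, Multiset.mem_coe,
    List.mem_map, List.mem_range, Finset.mem_Icc]
  constructor
  · rintro ⟨_, ⟨i, hi, rfl⟩, hx⟩
    omega
  · intro hx
    exact ⟨_, ⟨(x - b).toNat, by omega, rfl⟩, by omega⟩

theorem Ssize_symmSimple {b e : ℤ} (hb : -e ≤ b) (hbe : b ≤ e) :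
    (Ssize (symmSimple b e) : ℤ) = 2 * e + 1 := by
  rw [Ssize, supp_symmSimple hb hbe, Int.card_Icc]
  omega

theorem stmt16_general (b e : ℤ) (hb : -e ≤ b) (hbe : b ≤ e) (α : Multisegment)
    (hrange : ∀ Δ ∈ α, -e ≤ Δ.1 ∧ Δ.2 ≤ e)
    (hminShort : ∀ Δ ∈ α, Δ.1 = -e → b ≤ Δ.2)
    (hmaxShort : ∀ Δ ∈ α, Δ.2 = e → Δ.1 ≤ -b)
    (γ : Multisegment) (hγ : γ ≤ α) (hlad : IsLadder γ)
    (hn : e - b + 1 ≤ (nSeg γ : ℤ)) (hL : e + b + 1 ≤ Lmax γ) :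
    (Ssize γ : ℤ) = 2 * e + 1 ∧ γ = symmSimple b e := by
  obtain ⟨l, rfl, hbase, hend⟩ := hlad.exists_pairwise
  rw [nSeg, Multiset.coe_card] at hn
  have hmem : ∀ Δ ∈ l, Δ ∈ α := fun Δ hΔ => Multiset.mem_of_le hγ (Multiset.mem_coe.2 hΔ)
  obtain ⟨Δ, hΔ, hlong⟩ := exists_le_len_of_le_Lmax (by omega) hL
  have hne : l ≠ [] := List.ne_nil_of_mem (Multiset.mem_coe.1 hΔ)
  have hspan := Segment.len_add_length_le hbase hend hne (Multiset.mem_coe.1 hΔ)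
  have hhead_range := hrange _ (hmem _ (l.head_mem hne))
  have hlast_range := hrange _ (hmem _ (l.getLast_mem hne))
  obtain ⟨hN, hhead_base, hlast_end⟩ : (l.length : ℤ) = e - b + 1 ∧ (l.head hne).1 = -e ∧
      (l.getLast hne).2 = e := by
    omega
  have hhead_end := hminShort _ (hmem _ (l.head_mem hne)) hhead_base
  have hlast_base := hmaxShort _ (hmem _ (l.getLast_mem hne)) hlast_end
  have hne' : ∀ f : Segment → ℤ, l.map f ≠ [] := fun f => by simpa using hne
  have hl : l = (List.range (e - b + 1).toNat).map fun i : ℕ => ((-e + i, b + i) : Segment) := by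
    refine List.ext_getElem (by rw [List.length_map, List.length_range]; omega) fun i hi _ => ?_
    have hbi := List.getElem_eq_add_of_pairwise_lt hbase (hne' _) (a := -e) (i := i)
      (by rw [List.head_map]; omega) (by rw [List.getLast_map, List.length_map]; omega)
      (by simpa using hi)
    have hei := List.getElem_eq_add_of_pairwise_lt hend (hne' _) (a := b) (i := i)
      (by rw [List.head_map]; omega) (by rw [List.getLast_map, List.length_map]; omega)
      (by simpa using hi)
    simp only [List.getElem_map, List.getElem_range] at hbi hei ⊢
    exact Prod.ext hbi hei
  rw [hl, ← symmSimple_eq_coe]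
  exact ⟨Ssize_symmSimple hb hbe, rfl⟩

/-- if `α` has extreme values `±e`, contains the symmetric simple
sub-multisegment `α₁ = {[-e,b],...,[-b,e]}`, and the shortest segments of `α`
containing `-e` and `e` lie in `α₁` (length `e+b+1`), then any irreducible ladder
sub-multisegment `γ` of `α` generating a segment containing `{b,...,e}`
(so `n_γ ≥ e-b+1` and `L_γ ≥ e+b+1`) satisfies `S_γ = 2e+1` and equals `α₁`. -/
theorem stmt16 (b e : ℤ) (hb : -e ≤ b) (hbe : b ≤ e) (α : Multisegment)
    (hα : IsMultisegment α)
    (hsub : symmSimple b e ≤ α)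
    (hrange : ∀ Δ ∈ α, -e ≤ Δ.1 ∧ Δ.2 ≤ e)
    (hminShort : ∀ Δ ∈ α, Δ.1 = -e → b ≤ Δ.2)
    (hmaxShort : ∀ Δ ∈ α, Δ.2 = e → Δ.1 ≤ -b)
    (γ : Multisegment) (hγ : γ ≤ α) (hlad : IsLadder γ) (hirr : Cmax γ = 1)
    (hn : e - b + 1 ≤ (nSeg γ : ℤ)) (hL : e + b + 1 ≤ Lmax γ) :
    (Ssize γ : ℤ) = 2 * e + 1 ∧ γ = symmSimple b e :=
  stmt16_general b e hb hbe α hrange hminShort hmaxShort γ hγ hlad hn hL
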